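/- (One-iteration estimate, Lemma 3.2.) Let (β_{k+1}, u_{k+1}, v_{k+1}, λ_{k+1}) be the output of the k-th iteration of the inexact primal–dual algorithm from (β_k, u_k, v_k, λ_k) with step size α_k > 0 and tolerance ε_k > 0. Then 𝓔_{k+1} ≤ 𝓔_k/(1+α_k) + ε_k β_k^{-1} α_k² ‖H‖ (σ‖x*‖ + ‖Hᵀλ* − c̃‖) + ε_k β_k^{-1} ( σ α_k² ‖H‖ ‖x_{k+1} − x*‖ + α_k β_k ‖H‖ ‖v_{k+1} − u*‖ + β_k² ‖λ_{k+1} − λ*‖ ). -/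

import Mathlib

open scoped RealInnerProductSpace
open Matrix Finset

/-- Index type for the primal variable `u = (x, y, z) ∈ ℝ^{mn} × ℝⁿ × ℝᵐ`. -/
abbrev PIdx (m n : ℕ) := Fin (m * n) ⊕ (Fin n ⊕ Fin m)

/-- The primal space `ℝ^{mn} × ℝⁿ × ℝᵐ` with the Euclidean norm. -/
abbrev PrimalSpace (m n : ℕ) := EuclideanSpace ℝ (PIdx m n)

/-- The dual (multiplier) space `ℝ^{m+n+r}` with the Euclidean norm. -/
abbrev DualSpace (m n r : ℕ) := EuclideanSpace ℝ (Fin (m + n + r))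

/-- Matrix-vector multiplication regarded as a map between Euclidean spaces. -/
noncomputable def mv {a b : Type*} [Fintype a] [Fintype b]
    (A : Matrix a b ℝ) (x : EuclideanSpace ℝ b) : EuclideanSpace ℝ a :=
  (WithLp.equiv 2 _).symm (A.mulVec ((WithLp.equiv 2 _) x))

/-- The spectral (operator `ℓ²`) norm of a real matrix. -/
noncomputable def specNorm {a b : Type*} [Fintype a] [Fintype b] [DecidableEq b]
    (A : Matrix a b ℝ) : ℝ :=
  ‖LinearMap.toContinuousLinearMap (Matrix.toEuclideanLin A)‖

/-- All data of the inexact primal-dual algorithm for the generalized transport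
problem `min h(x)` over `u = (x,y,z) ∈ Σ` s.t. `Hu = b`, together with the
produced iterates. -/
structure PDSetting (m n r : ℕ) where
  /-- the strong convexity parameter `σ ≥ 0` of `h` -/
  sigma : ℝ
  /-- the vector `φ` in `h(x) = (σ/2)‖x − φ‖² + cᵀx` -/
  phi : EuclideanSpace ℝ (Fin (m * n))
  /-- the cost vector `c` -/
  c : EuclideanSpace ℝ (Fin (m * n))
  /-- the constraint matrix `H` -/
  H : Matrix (Fin (m + n + r)) (PIdx m n) ℝ
  /-- the constraint right-hand side `b` -/
  b : DualSpace m n r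
  /-- the intervals whose product is the box `Σ` -/
  box : PIdx m n → Set ℝ
  /-- the Euclidean projection onto `Σ` -/
  proj : PrimalSpace m n → PrimalSpace m n
  /-- the step sizes `α_k > 0` -/
  alpha : ℕ → ℝ
  /-- the tolerances `ε_k > 0` -/
  eps : ℕ → ℝ
  /-- the primal iterates `u_k` -/
  u : ℕ → PrimalSpace m n
  /-- the auxiliary iterates `v_k` -/
  v : ℕ → PrimalSpace m n
  /-- the dual iterates `λ_k` -/
  lam : ℕ → DualSpace m n r
  /-- `lamS k` is the exact solution `λ_{k+1}^{#}`, the unique zero of `F_k` -/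
  lamS : ℕ → DualSpace m n r
  /-- a primal solution `u* = (x*, y*, z*)` -/
  ustar : PrimalSpace m n
  /-- a dual solution `λ*` -/
  lamstar : DualSpace m n r

/-- The `x`-component of a primal vector `u = (x,y,z)`. -/
noncomputable def xPart {m n : ℕ} (u : PrimalSpace m n) : EuclideanSpace ℝ (Fin (m * n)) :=
  (WithLp.equiv 2 _).symm fun i => u (Sum.inl i)

namespace PDSetting

variable {m n r : ℕ} (S : PDSetting m n r)

/-- `β_k = ∏_{i=0}^{k-1} 1/(1+α_i)`, i.e. `β₀ = 1`, `β_{k+1} = β_k/(1+α_k)`. -/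
noncomputable def beta (k : ℕ) : ℝ := ∏ i ∈ range k, (1 + S.alpha i)⁻¹

/-- `τ_k = β_k (1+α_k)/α_k²`. -/
noncomputable def tau (k : ℕ) : ℝ := S.beta k * (1 + S.alpha k) / (S.alpha k) ^ 2

/-- `η_k = σ + τ_k`. -/
noncomputable def eta (k : ℕ) : ℝ := S.sigma + S.tau k

/-- The diagonal of `D_k = diag(η_k I_{mn}, τ_k Iₙ, τ_k Iₘ)`. -/
noncomputable def dEntry (k : ℕ) : PIdx m n → ℝ :=
  Sum.elim (fun _ => S.eta k) (fun _ => S.tau k)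

/-- The matrix `D_k`. -/
noncomputable def Dmat (k : ℕ) : Matrix (PIdx m n) (PIdx m n) ℝ :=
  Matrix.diagonal (S.dEntry k)

/-- The objective `h(x) = (σ/2)‖x − φ‖² + cᵀx`, as a function of `u`. -/
noncomputable def hObj (u : PrimalSpace m n) : ℝ :=
  S.sigma / 2 * ‖xPart u - S.phi‖ ^ 2 + ⟪S.c, xPart u⟫

/-- The vector `c̃ = (σφ − c, 0ₙ, 0ₘ)`. -/
noncomputable def ctil : PrimalSpace m n :=
  (WithLp.equiv 2 _).symm (Sum.elim (fun i => S.sigma * S.phi i - S.c i) fun _ => 0)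

/-- The box `Σ = 𝒳 × 𝒴 × 𝒵`. -/
def SigmaSet : Set (PrimalSpace m n) := {u | ∀ i, u i ∈ S.box i}

/-- The Lagrangian `𝓛(u, λ) = h(x) + ⟨λ, Hu − b⟩` (for `u ∈ Σ`). -/
noncomputable def Lag (u : PrimalSpace m n) (lam : DualSpace m n r) : ℝ :=
  S.hObj u + ⟪lam, mv S.H u - S.b⟫

/-- `w_k = c̃ + β_k (u_k + α_k v_k)/α_k²`. -/
noncomputable def wk (k : ℕ) : PrimalSpace m n :=
  S.ctil + (S.beta k / (S.alpha k) ^ 2) • (S.u k + S.alpha k • S.v k)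

/-- `λ̃_k = β_{k+1} [λ_k − β_k⁻¹ (Hu_k − b)] − b`. -/
noncomputable def lamTil (k : ℕ) : DualSpace m n r :=
  S.beta (k + 1) • (S.lam k - (S.beta k)⁻¹ • (mv S.H (S.u k) - S.b)) - S.b

/-- `F_k(λ) = β_{k+1} λ − H proj_Σ(D_k⁻¹(w_k − Hᵀλ)) − λ̃_k`. -/
noncomputable def Fk (k : ℕ) (lam : DualSpace m n r) : DualSpace m n r :=
  S.beta (k + 1) • lam -
    mv S.H (S.proj (mv (S.Dmat k)⁻¹ (S.wk k - mv S.Hᵀ lam))) - S.lamTil k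

/-- `u_{k+1}^{#} = proj_Σ(D_k⁻¹(w_k − Hᵀ λ_{k+1}^{#}))`. -/
noncomputable def uS (k : ℕ) : PrimalSpace m n :=
  S.proj (mv (S.Dmat k)⁻¹ (S.wk k - mv S.Hᵀ (S.lamS k)))

/-- `v_{k+1}^{#} = u_{k+1}^{#} + (u_{k+1}^{#} − u_k)/α_k`. -/
noncomputable def vS (k : ℕ) : PrimalSpace m n :=
  S.uS k + (S.alpha k)⁻¹ • (S.uS k - S.u k)

/-- The discrete Lyapunov function
`𝓔(β,u,v,λ) = 𝓛(u,λ*) − 𝓛(u*,λ) + (β/2)(‖v − u*‖² + ‖λ − λ*‖²)`. -/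
noncomputable def Lyap (βv : ℝ) (u v : PrimalSpace m n) (lam : DualSpace m n r) : ℝ :=
  S.Lag u S.lamstar - S.Lag S.ustar lam +
    βv / 2 * (‖v - S.ustar‖ ^ 2 + ‖lam - S.lamstar‖ ^ 2)

/-- `𝓔_k`. -/
noncomputable def E (k : ℕ) : ℝ := S.Lyap (S.beta k) (S.u k) (S.v k) (S.lam k)

/-- `𝓔_{k+1}^{#}`, the Lyapunov function at the exact update of step `k`. -/
noncomputable def ESharp (k : ℕ) : ℝ :=
  S.Lyap (S.beta (k + 1)) (S.uS k) (S.vS k) (S.lamS k)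

/-- `ε̂_k = ∑_{i<k} ε_i α_i² β_i⁻²`. -/
noncomputable def epsHat (k : ℕ) : ℝ :=
  ∑ i ∈ range k, S.eps i * (S.alpha i) ^ 2 / (S.beta i) ^ 2

/-- `ε̃_k = ∑_{i<k} ε_i β_i^{-3/2} (α_i² + α_i √β_i + β_i^{3/2})`. -/
noncomputable def epsTil (k : ℕ) : ℝ :=
  ∑ i ∈ range k, S.eps i / (S.beta i) ^ ((3 : ℝ) / 2) *
    ((S.alpha i) ^ 2 + S.alpha i * Real.sqrt (S.beta i) + (S.beta i) ^ ((3 : ℝ) / 2))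

/-- `Z = ‖H‖(σ‖x*‖ + ‖Hᵀλ* − c̃‖)`. -/
noncomputable def Z : ℝ :=
  specNorm S.H * (S.sigma * ‖xPart S.ustar‖ + ‖mv S.Hᵀ S.lamstar - S.ctil‖)

/-- `Q = 1 + (1 + √σ)‖H‖`. -/
noncomputable def Q : ℝ := 1 + (1 + Real.sqrt S.sigma) * specNorm S.H

/-- All hypotheses of the inexact primal–dual algorithm: the box is a nonempty
closed product of intervals, `proj` is the nearest-point projection onto it,
`(u*, λ*)` is a saddle point, the iterates follow the algorithm with inexactness
`‖λ_{k+1} − λ_{k+1}^{#}‖ ≤ ε_k`, and the exact one-step contraction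
`𝓔_{k+1}^{#} − 𝓔_k ≤ −α_k 𝓔_{k+1}^{#}` holds. -/
structure IsValid : Prop where
  hsigma : 0 ≤ S.sigma
  hbox_ne : ∀ i, (S.box i).Nonempty
  hbox_cl : ∀ i, IsClosed (S.box i)
  hbox_int : ∀ i, (S.box i).OrdConnected
  hproj_mem : ∀ x, S.proj x ∈ S.SigmaSet
  hproj_near : ∀ x, ∀ y ∈ S.SigmaSet, dist x (S.proj x) ≤ dist x y
  halpha : ∀ k, 0 < S.alpha k
  heps : ∀ k, 0 < S.eps k
  hustar : S.ustar ∈ S.SigmaSet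
  hfeas : mv S.H S.ustar = S.b
  hsaddle : ∀ u ∈ S.SigmaSet, S.Lag S.ustar S.lamstar ≤ S.Lag u S.lamstar
  hu0 : S.u 0 ∈ S.SigmaSet
  hlamS : ∀ k, S.Fk k (S.lamS k) = 0
  hlam_err : ∀ k, ‖S.lam (k + 1) - S.lamS k‖ ≤ S.eps k
  hu_upd : ∀ k, S.u (k + 1) = S.proj (mv (S.Dmat k)⁻¹ (S.wk k - mv S.Hᵀ (S.lam (k + 1))))
  hv_upd : ∀ k, S.v (k + 1) = S.u (k + 1) + (S.alpha k)⁻¹ • (S.u (k + 1) - S.u k)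
  hcontract : ∀ k, S.ESharp k - S.E k ≤ -S.alpha k * S.ESharp k

end PDSetting

/-!
The inexact step differs from the exact one only through `λ_{k+1} - λ_{k+1}^#`, of norm at most
`ε_k`. The primal update `λ ↦ proj_Σ(D_k⁻¹(w_k - Hᵀλ))` is the composition of `Hᵀ`, of `D_k⁻¹`
(whose entries are at most `τ_k⁻¹`) and of a nonexpansive projection, so
`‖u_{k+1} - u_{k+1}^#‖ ≤ ε_k τ_k⁻¹ ‖H‖ ≤ ε_k β_k⁻¹ α_k² ‖H‖`, and `v_{k+1} - v_{k+1}^#` is the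
multiple `1 + α_k⁻¹` of it. Comparing `𝓔_{k+1}` with `𝓔_{k+1}^#` term by term (a first-order bound
for the convex `h`, `‖a‖² - ‖b‖² ≤ 2‖a‖‖a - b‖` for the quadratic terms, and `𝓛(u*, ·)` constant by
feasibility of `u*`) bounds their difference by the error terms, while the exact contraction gives
`𝓔_{k+1}^# ≤ 𝓔_k / (1 + α_k)`.
-/

open scoped Matrix.Norms.L2Operator

section MatrixVector

variable {a b : Type*} [Fintype a] [Fintype b] [DecidableEq b]

lemma mv_eq_toEuclideanLin (A : Matrix a b ℝ) (x : EuclideanSpace ℝ b) :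
    mv A x = Matrix.toEuclideanLin A x := rfl

lemma mv_sub (A : Matrix a b ℝ) (x y : EuclideanSpace ℝ b) :
    mv A (x - y) = mv A x - mv A y :=
  map_sub (Matrix.toEuclideanLin A) x y

lemma inner_mv_right [DecidableEq a] (A : Matrix a b ℝ) (x : EuclideanSpace ℝ a)
    (y : EuclideanSpace ℝ b) : ⟪x, mv A y⟫ = ⟪mv Aᵀ x, y⟫ := by
  rw [mv_eq_toEuclideanLin, mv_eq_toEuclideanLin, ← Matrix.conjTranspose_eq_transpose_of_trivial,
    Matrix.toEuclideanLin_conjTranspose_eq_adjoint, LinearMap.adjoint_inner_left]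

lemma specNorm_eq_l2_opNorm (A : Matrix a b ℝ) : specNorm A = ‖A‖ := rfl

lemma specNorm_nonneg (A : Matrix a b ℝ) : 0 ≤ specNorm A := norm_nonneg _

lemma norm_mv_le (A : Matrix a b ℝ) (x : EuclideanSpace ℝ b) :
    ‖mv A x‖ ≤ specNorm A * ‖x‖ :=
  A.l2_opNorm_mulVec x

lemma specNorm_transpose [DecidableEq a] (A : Matrix a b ℝ) : specNorm Aᵀ = specNorm A := by
  simpa only [specNorm_eq_l2_opNorm, Matrix.conjTranspose_eq_transpose_of_trivial] using
    A.l2_opNorm_conjTranspose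

lemma specNorm_diagonal_le (d : b → ℝ) {c : ℝ} (hc : 0 ≤ c) (hd : ∀ i, |d i| ≤ c) :
    specNorm (Matrix.diagonal d) ≤ c := by
  rw [specNorm_eq_l2_opNorm, Matrix.l2_opNorm_diagonal]
  exact (pi_norm_le_iff_of_nonneg hc).2 hd

end MatrixVector

section InnerProductSpace

variable {E : Type*} [NormedAddCommGroup E] [InnerProductSpace ℝ E]

lemma sq_norm_sub_sq_norm_le_two_inner (x y : E) : ‖x‖ ^ 2 - ‖y‖ ^ 2 ≤ 2 * ⟪x, x - y⟫ := by
  have h := norm_sub_sq_real x (x - y)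
  rw [sub_sub_cancel] at h
  nlinarith [sq_nonneg ‖x - y‖]

lemma sq_norm_sub_sq_norm_le (x y : E) : ‖x‖ ^ 2 - ‖y‖ ^ 2 ≤ 2 * ‖x‖ * ‖x - y‖ := by
  have := real_inner_le_norm x (x - y)
  linarith [sq_norm_sub_sq_norm_le_two_inner x y]

lemma inner_sub_le_zero_of_forall_norm_sub_le {K : Set E} (hK : Convex ℝ K) {x p : E}
    (hp : p ∈ K) (hnear : ∀ y ∈ K, ‖x - p‖ ≤ ‖x - y‖) : ∀ w ∈ K, ⟪x - p, w - p⟫ ≤ 0 := by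
  have : Nonempty K := ⟨⟨p, hp⟩⟩
  have hbdd : BddBelow (Set.range fun w : K => ‖x - w‖) :=
    ⟨0, by rintro _ ⟨w, rfl⟩; exact norm_nonneg _⟩
  exact (norm_eq_iInf_iff_real_inner_le_zero hK hp).1
    (le_antisymm (le_ciInf fun w => hnear w w.2) (ciInf_le hbdd ⟨p, hp⟩))

lemma norm_sub_le_of_inner_le_zero {x y p q : E} (hp : ⟪x - p, q - p⟫ ≤ 0)
    (hq : ⟪y - q, p - q⟫ ≤ 0) : ‖p - q‖ ≤ ‖x - y‖ := by
  have key : ‖p - q‖ ^ 2 ≤ ⟪x - y, p - q⟫ := by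
    have : ⟪x - y, p - q⟫ - ‖p - q‖ ^ 2 = -⟪x - p, q - p⟫ - ⟪y - q, p - q⟫ := by
      rw [← real_inner_self_eq_norm_sq, ← inner_sub_left, ← inner_neg_right, neg_sub,
        ← inner_sub_left]
      congr 1
      abel
    linarith
  have cs := real_inner_le_norm (x - y) (p - q)
  nlinarith [norm_nonneg (p - q), norm_nonneg (x - y)]

end InnerProductSpace

section XPart

variable {m n : ℕ}

lemma xPart_sub (u v : PrimalSpace m n) : xPart (u - v) = xPart u - xPart v := by
  ext i
  simp [xPart]

lemma norm_xPart_le (u : PrimalSpace m n) : ‖xPart u‖ ≤ ‖u‖ := by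
  rw [EuclideanSpace.norm_eq, EuclideanSpace.norm_eq, Fintype.sum_sum_type]
  gcongr
  exact le_add_of_nonneg_right (Finset.sum_nonneg fun i _ => sq_nonneg _)

end XPart

namespace PDSetting

variable {m n r : ℕ} (S : PDSetting m n r)

lemma convex_sigmaSet (hbox : ∀ i, (S.box i).OrdConnected) : Convex ℝ S.SigmaSet :=
  fun _ hu _ hw _ _ hp hq hpq i =>
    convex_iff_ordConnected.2 (hbox i) (hu i) (hw i) hp hq hpq

lemma beta_succ (k : ℕ) : S.beta (k + 1) = S.beta k / (1 + S.alpha k) :=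
  Finset.prod_range_succ _ _

lemma tau_le_dEntry (hσ : 0 ≤ S.sigma) (k : ℕ) (i : PIdx m n) : S.tau k ≤ S.dEntry k i := by
  rcases i with i | i
  · simp only [dEntry, Sum.elim_inl, eta]; linarith
  · simp only [dEntry, Sum.elim_inr, le_refl]

lemma inner_ctil (w : PrimalSpace m n) :
    ⟪S.ctil, w⟫ = S.sigma * ⟪S.phi, xPart w⟫ - ⟪S.c, xPart w⟫ := by
  simp only [ctil, xPart, PiLp.inner_apply, RCLike.inner_apply, starRingEnd_apply, star_trivial,
    WithLp.equiv_symm_apply, Fintype.sum_sum_type, Sum.elim_inl, Sum.elim_inr, mul_zero,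
    Finset.sum_const_zero, add_zero, Finset.mul_sum, ← Finset.sum_sub_distrib]
  congr 1
  funext i
  ring

-- Convexity of `h`, whose gradient at `u = (x, y, z)` is `σ (x, 0, 0) - c̃`.
lemma hObj_sub_hObj_le (hσ : 0 ≤ S.sigma) (u u' : PrimalSpace m n) :
    S.hObj u - S.hObj u' ≤ S.sigma * ⟪xPart u, xPart (u - u')⟫ - ⟪S.ctil, u - u'⟫ := by
  have hquad := sq_norm_sub_sq_norm_le_two_inner (xPart u - S.phi) (xPart u' - S.phi)
  rw [sub_sub_sub_cancel_right, ← xPart_sub, inner_sub_left] at hquad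
  have hc : ⟪S.c, xPart u⟫ - ⟪S.c, xPart u'⟫ = ⟪S.c, xPart (u - u')⟫ := by
    rw [xPart_sub, inner_sub_right]
  rw [S.inner_ctil, hObj, hObj]
  linarith [mul_le_mul_of_nonneg_left hquad hσ]

lemma Lag_sub_Lag_le (hσ : 0 ≤ S.sigma) (u u' w : PrimalSpace m n) (lam : DualSpace m n r) :
    S.Lag u lam - S.Lag u' lam ≤
      (S.sigma * ‖xPart u - xPart w‖ + (S.sigma * ‖xPart w‖ + ‖mv S.Hᵀ lam - S.ctil‖)) *
        ‖u - u'‖ := by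
  have hLin : ⟪lam, mv S.H u - S.b⟫ - ⟪lam, mv S.H u' - S.b⟫ = ⟪mv S.Hᵀ lam, u - u'⟫ := by
    rw [← inner_sub_right, sub_sub_sub_cancel_right, ← mv_sub, inner_mv_right]
  have hx : ⟪xPart u, xPart (u - u')⟫ ≤ (‖xPart u - xPart w‖ + ‖xPart w‖) * ‖u - u'‖ := by
    calc ⟪xPart u, xPart (u - u')⟫ ≤ ‖xPart u‖ * ‖xPart (u - u')‖ := real_inner_le_norm _ _
      _ ≤ (‖xPart u - xPart w‖ + ‖xPart w‖) * ‖u - u'‖ := by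
        gcongr
        · exact norm_le_norm_sub_add _ _
        · exact norm_xPart_le _
  have hc := real_inner_le_norm (mv S.Hᵀ lam - S.ctil) (u - u')
  rw [inner_sub_left] at hc
  have hObj := S.hObj_sub_hObj_le hσ u u'
  rw [Lag, Lag]
  linarith [mul_le_mul_of_nonneg_left hx hσ]

lemma Lag_of_feasible {u : PrimalSpace m n} (hu : mv S.H u = S.b) (lam : DualSpace m n r) :
    S.Lag u lam = S.hObj u := by
  rw [Lag, hu, sub_self, inner_zero_right, add_zero]

end PDSetting

namespace PDSetting.IsValid

variable {m n r : ℕ} {S : PDSetting m n r}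

lemma norm_proj_sub_proj_le (hS : S.IsValid) (x y : PrimalSpace m n) :
    ‖S.proj x - S.proj y‖ ≤ ‖x - y‖ := by
  have hvar (z : PrimalSpace m n) : ∀ w ∈ S.SigmaSet, ⟪z - S.proj z, w - S.proj z⟫ ≤ 0 :=
    inner_sub_le_zero_of_forall_norm_sub_le (S.convex_sigmaSet hS.hbox_int) (hS.hproj_mem z)
      fun w hw => by simpa only [dist_eq_norm] using hS.hproj_near z w hw
  exact norm_sub_le_of_inner_le_zero (hvar x _ (hS.hproj_mem y)) (hvar y _ (hS.hproj_mem x))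

lemma beta_pos (hS : S.IsValid) (k : ℕ) : 0 < S.beta k :=
  Finset.prod_pos fun i _ => inv_pos.2 (by linarith [hS.halpha i])

lemma tau_pos (hS : S.IsValid) (k : ℕ) : 0 < S.tau k :=
  div_pos (mul_pos (hS.beta_pos k) (by linarith [hS.halpha k])) (pow_pos (hS.halpha k) 2)

lemma inv_tau_le (hS : S.IsValid) (k : ℕ) : (S.tau k)⁻¹ ≤ (S.beta k)⁻¹ * S.alpha k ^ 2 := by
  have hα := hS.halpha k
  have hβ := hS.beta_pos k
  rw [tau, inv_div, div_le_iff₀ (by positivity)]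
  calc S.alpha k ^ 2 ≤ S.alpha k ^ 2 * (1 + S.alpha k) := by nlinarith [sq_nonneg (S.alpha k)]
    _ = (S.beta k)⁻¹ * S.alpha k ^ 2 * (S.beta k * (1 + S.alpha k)) := by field_simp

lemma specNorm_Dmat_inv_le (hS : S.IsValid) (k : ℕ) : specNorm (S.Dmat k)⁻¹ ≤ (S.tau k)⁻¹ := by
  have hτ := hS.tau_pos k
  have hτd := S.tau_le_dEntry hS.hsigma k
  have hinv : (S.Dmat k)⁻¹ = Matrix.diagonal (S.dEntry k)⁻¹ := by
    refine Matrix.inv_eq_right_inv ?_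
    rw [Dmat, Matrix.diagonal_mul_diagonal, ← Matrix.diagonal_one]
    congr 1
    funext i
    exact mul_inv_cancel₀ (hτ.trans_le (hτd i)).ne'
  rw [hinv]
  refine specNorm_diagonal_le _ (inv_nonneg.2 hτ.le) fun i => ?_
  rw [Pi.inv_apply, abs_inv, abs_of_pos (hτ.trans_le (hτd i))]
  exact inv_anti₀ hτ (hτd i)

lemma norm_u_succ_sub_uS_le (hS : S.IsValid) (k : ℕ) :
    ‖S.u (k + 1) - S.uS k‖ ≤ S.eps k * (S.beta k)⁻¹ * S.alpha k ^ 2 * specNorm S.H := by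
  have hτ := hS.tau_pos k
  have hN := specNorm_nonneg S.H
  have hdiff : mv (S.Dmat k)⁻¹ (S.wk k - mv S.Hᵀ (S.lam (k + 1))) -
      mv (S.Dmat k)⁻¹ (S.wk k - mv S.Hᵀ (S.lamS k)) =
        mv (S.Dmat k)⁻¹ (mv S.Hᵀ (S.lamS k - S.lam (k + 1))) := by
    rw [← mv_sub, mv_sub S.Hᵀ, sub_sub_sub_cancel_left]
  have herr : ‖S.lamS k - S.lam (k + 1)‖ ≤ S.eps k := by
    rw [norm_sub_rev]; exact hS.hlam_err k
  calc ‖S.u (k + 1) - S.uS k‖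
      ≤ ‖mv (S.Dmat k)⁻¹ (mv S.Hᵀ (S.lamS k - S.lam (k + 1)))‖ := by
        rw [hS.hu_upd k, uS, ← hdiff]; exact hS.norm_proj_sub_proj_le _ _
    _ ≤ (S.tau k)⁻¹ * (specNorm S.H * S.eps k) := by
        refine (norm_mv_le _ _).trans ?_
        gcongr
        · exact hS.specNorm_Dmat_inv_le k
        · exact (norm_mv_le _ _).trans (by rw [specNorm_transpose]; gcongr)
    _ ≤ (S.beta k)⁻¹ * S.alpha k ^ 2 * (specNorm S.H * S.eps k) := by
        have := hS.heps k
        gcongr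
        exact hS.inv_tau_le k
    _ = S.eps k * (S.beta k)⁻¹ * S.alpha k ^ 2 * specNorm S.H := by ring

lemma beta_succ_mul_norm_v_succ_sub_vS (hS : S.IsValid) (k : ℕ) :
    S.beta (k + 1) * ‖S.v (k + 1) - S.vS k‖ = S.beta k / S.alpha k * ‖S.u (k + 1) - S.uS k‖ := by
  have hα := hS.halpha k
  have hv : S.v (k + 1) - S.vS k = (1 + (S.alpha k)⁻¹) • (S.u (k + 1) - S.uS k) := by
    rw [hS.hv_upd k, vS]; module
  rw [hv, norm_smul, Real.norm_of_nonneg (by positivity), S.beta_succ k, ← mul_assoc]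
  congr 1
  field_simp
  ring

lemma E_succ_sub_ESharp_le (hS : S.IsValid) (k : ℕ) :
    S.E (k + 1) - S.ESharp k ≤
      (S.sigma * ‖xPart (S.u (k + 1)) - xPart S.ustar‖ +
          (S.sigma * ‖xPart S.ustar‖ + ‖mv S.Hᵀ S.lamstar - S.ctil‖)) *
          ‖S.u (k + 1) - S.uS k‖ +
        S.beta (k + 1) * ‖S.v (k + 1) - S.vS k‖ * ‖S.v (k + 1) - S.ustar‖ +
        S.beta (k + 1) * ‖S.lam (k + 1) - S.lamS k‖ * ‖S.lam (k + 1) - S.lamstar‖ := by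
  have hβ : 0 < S.beta (k + 1) := hS.beta_pos (k + 1)
  have hLag := S.Lag_sub_Lag_le hS.hsigma (S.u (k + 1)) (S.uS k) S.ustar S.lamstar
  have hv := sq_norm_sub_sq_norm_le (S.v (k + 1) - S.ustar) (S.vS k - S.ustar)
  have hlam := sq_norm_sub_sq_norm_le (S.lam (k + 1) - S.lamstar) (S.lamS k - S.lamstar)
  rw [sub_sub_sub_cancel_right] at hv hlam
  simp only [E, ESharp, Lyap, S.Lag_of_feasible hS.hfeas]
  linarith [mul_le_mul_of_nonneg_left hv hβ.le, mul_le_mul_of_nonneg_left hlam hβ.le]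

lemma beta_succ_le (hS : S.IsValid) (k : ℕ) : S.beta (k + 1) ≤ S.beta k := by
  rw [S.beta_succ]
  exact div_le_self (hS.beta_pos k).le (by linarith [hS.halpha k])

lemma ESharp_le (hS : S.IsValid) (k : ℕ) : S.ESharp k ≤ S.E k / (1 + S.alpha k) := by
  rw [le_div_iff₀ (by linarith [hS.halpha k])]
  linarith [hS.hcontract k]

end PDSetting.IsValid

/-- one-iteration estimate, Lemma 3.2. -/
theorem stmt2 {m n r : ℕ} (S : PDSetting m n r) (hS : S.IsValid) (k : ℕ) :
    S.E (k + 1) ≤ S.E k / (1 + S.alpha k)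
      + S.eps k * (S.beta k)⁻¹ * (S.alpha k) ^ 2 * specNorm S.H *
          (S.sigma * ‖xPart S.ustar‖ + ‖mv S.Hᵀ S.lamstar - S.ctil‖)
      + S.eps k * (S.beta k)⁻¹ *
          (S.sigma * (S.alpha k) ^ 2 * specNorm S.H *
              ‖xPart (S.u (k + 1)) - xPart S.ustar‖
            + S.alpha k * S.beta k * specNorm S.H * ‖S.v (k + 1) - S.ustar‖
            + (S.beta k) ^ 2 * ‖S.lam (k + 1) - S.lamstar‖) := by
  have hα := hS.halpha k
  have hβ := hS.beta_pos k
  have hσ := hS.hsigma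
  have hε := hS.heps k
  have hβα : 0 ≤ S.beta k / S.alpha k := div_nonneg hβ.le hα.le
  have hβ_succ := (hS.beta_pos (k + 1)).le
  have hpert := hS.E_succ_sub_ESharp_le k
  rw [hS.beta_succ_mul_norm_v_succ_sub_vS k] at hpert
  grw [hS.norm_u_succ_sub_uS_le k, hS.hlam_err k, hS.beta_succ_le k] at hpert
  calc S.E (k + 1) = S.ESharp k + (S.E (k + 1) - S.ESharp k) := by ring
    _ ≤ S.E k / (1 + S.alpha k) + _ := add_le_add (hS.ESharp_le k) hpert
    _ = _ := by field_simp; ring
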